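/- arXiv:2508.06257 — 2 statements merged into one kernel-verified Lean document; each statement's English description precedes it below -/
import Mathlib

section
/- Let {Z^(m,0)} be any initial point and, for each step k ≥ 0, define the Newton-type update Z^(m,k+1) = (1/9)(S^(m))² Z^(m,k) + (1/9)(3 I_N + S^(m)) ( Σ_{e=1}^M P_{em} Z^(e,k) + Z_init^(m) ) simultaneously for every m ∈ {1,…,M}. Then the objective is monotonically non-increasing across iterations: H({Z^(m,k+1)}_{m=1}^M) ≤ H({Z^(m,k)}_{m=1}^M) for all k ≥ 0. -/
/-!
`H` is the quadratic `½⟨Z, A Z⟩ - ⟨Z_init, Z⟩ + const` for the Frobenius pairing of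
configurations, with Hessian `(A Z)^(m) = (3 I - S^(m)) Z^(m) - Σ_e P_{em} Z^(e)`, and the update
is the preconditioned gradient step `Z^(m) ↦ Z^(m) - (1/9)(3 I + S^(m)) (A Z - Z_init)^(m)`.
A symmetric doubly stochastic matrix `W` satisfies `⟨X, W X⟩ ≥ -‖X‖²`, because
`Σ_{ij} W_ij ‖x_i + x_j‖² ≥ 0`. Applied to `P` this bounds `A` by the block-diagonal
`4 I - S^(m)`; applied to `S^(m)` it shows that each block of the step decreases this majorant,
the change being `(3 + s)(s - s² - 6) / 162 ≤ 0` on an eigenvector of `S^(m)` with eigenvalue `s`.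
-/

open scoped BigOperators
open Matrix

attribute [local instance] Matrix.frobeniusNormedAddCommGroup Matrix.frobeniusNormedSpace

/-- The multiplex graph objective
`H({Z^(m)}) = (1/4) Σ_m Σ_{i,j} S^(m)_{ij} ‖Z_i^(m) − Z_j^(m)‖₂²
  + (1/4) Σ_{e,n} P_{en} ‖Z^(e) − Z^(n)‖_F² + (1/2) Σ_m ‖Z^(m) − Z_init^(m)‖_F²`. -/
noncomputable def multiObj {N d M : ℕ}
    (S : Fin M → Matrix (Fin N) (Fin N) ℝ) (P : Matrix (Fin M) (Fin M) ℝ)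
    (Zinit : Fin M → Matrix (Fin N) (Fin d) ℝ)
    (Z : Fin M → Matrix (Fin N) (Fin d) ℝ) : ℝ :=
  (1 / 4) * ∑ m, ∑ i, ∑ j, S m i j * ∑ l, (Z m i l - Z m j l) ^ 2
    + (1 / 4) * ∑ e, ∑ n, P e n * ∑ i, ∑ l, (Z e i l - Z n i l) ^ 2
    + (1 / 2) * ∑ m, ∑ i, ∑ l, (Z m i l - Zinit m i l) ^ 2

section StochasticWeights

variable {ι : Type*} [Fintype ι] {W : Matrix ι ι ℝ}

theorem sum_sum_mul_swap (hW : Wᵀ = W) (f : ι → ι → ℝ) :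
    ∑ i, ∑ j, W i j * f i j = ∑ i, ∑ j, W i j * f j i := by
  rw [Finset.sum_comm]
  refine Finset.sum_congr rfl fun i _ => Finset.sum_congr rfl fun j _ => ?_
  rw [← hW, transpose_apply, hW]

theorem sum_sum_mul_eq_sum_of_row (hrow : ∀ i, ∑ j, W i j = 1) (g : ι → ℝ) :
    ∑ i, ∑ j, W i j * g i = ∑ i, g i := by
  simp only [← Finset.sum_mul, hrow, one_mul]

theorem sum_sum_mul_eq_sum_of_col (hW : Wᵀ = W) (hrow : ∀ i, ∑ j, W i j = 1) (g : ι → ℝ) :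
    ∑ i, ∑ j, W i j * g j = ∑ i, g i := by
  rw [sum_sum_mul_swap hW (fun _ j => g j), sum_sum_mul_eq_sum_of_row hrow]

variable {V : Type*} [AddCommGroup V] [Module ℝ V] (B : LinearMap.BilinForm ℝ V)

theorem sum_sum_mul_bilin_sub (hW : Wᵀ = W) (hrow : ∀ i, ∑ j, W i j = 1) (x : ι → V) :
    ∑ i, ∑ j, W i j * B (x i - x j) (x i - x j)
      = 2 * (∑ i, B (x i) (x i) - ∑ i, ∑ j, W i j * B (x i) (x j)) := by
  simp only [map_sub, LinearMap.sub_apply, mul_sub, Finset.sum_sub_distrib]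
  rw [sum_sum_mul_eq_sum_of_row hrow (fun i => B (x i) (x i)),
    sum_sum_mul_eq_sum_of_col hW hrow (fun j => B (x j) (x j)),
    sum_sum_mul_swap hW (fun i j => B (x j) (x i))]
  ring

theorem sum_sum_mul_bilin_add (hW : Wᵀ = W) (hrow : ∀ i, ∑ j, W i j = 1) (x : ι → V) :
    ∑ i, ∑ j, W i j * B (x i + x j) (x i + x j)
      = 2 * (∑ i, B (x i) (x i) + ∑ i, ∑ j, W i j * B (x i) (x j)) := by
  simp only [map_add, LinearMap.add_apply, mul_add, Finset.sum_add_distrib]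
  rw [sum_sum_mul_eq_sum_of_row hrow (fun i => B (x i) (x i)),
    sum_sum_mul_eq_sum_of_col hW hrow (fun j => B (x j) (x j)),
    sum_sum_mul_swap hW (fun i j => B (x j) (x i))]
  ring

theorem neg_sum_bilin_le_sum_sum_mul_bilin (hW : Wᵀ = W) (hnonneg : ∀ i j, 0 ≤ W i j)
    (hrow : ∀ i, ∑ j, W i j = 1) (hB : ∀ v, 0 ≤ B v v) (x : ι → V) :
    -∑ i, B (x i) (x i) ≤ ∑ i, ∑ j, W i j * B (x i) (x j) := by
  have h := sum_sum_mul_bilin_add B hW hrow x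
  have : 0 ≤ ∑ i, ∑ j, W i j * B (x i + x j) (x i + x j) :=
    Finset.sum_nonneg fun i _ => Finset.sum_nonneg fun j _ => mul_nonneg (hnonneg i j) (hB _)
  linarith

end StochasticWeights

section Quadratic

variable {V : Type*} [AddCommGroup V] [Module ℝ V] {B : LinearMap.BilinForm ℝ V}
  {A : V →ₗ[ℝ] V}

theorem bilin_quadratic_add (hB : ∀ x y, B x y = B y x) (hA : ∀ x y, B (A x) y = B x (A y))
    (b x d : V) :
    1 / 2 * B (x + d) (A (x + d)) - B b (x + d)
      = 1 / 2 * B x (A x) - B b x + B (A x - b) d + 1 / 2 * B d (A d) := by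
  simp only [map_add, map_sub, LinearMap.add_apply, LinearMap.sub_apply]
  rw [hB d (A x), ← hA x d]
  ring

theorem preconditioned_step_descent (hB : ∀ v, 0 ≤ B v v)
    (hA : ∀ x y, B (A x) y = B x (A y)) (hAB : ∀ v, -B v v ≤ B v (A v)) {g d : V}
    (hd : d = -(9 : ℝ)⁻¹ • ((3 : ℝ) • g + A g)) :
    B g d + 1 / 2 * B d ((4 : ℝ) • d - A d) ≤ 0 := by
  have hg := hAB g
  have hAg := hAB (A g)
  have hAg' := hB (A g)
  have hg' := hB g
  simp only [hd, map_add, map_sub, map_smul, LinearMap.add_apply, LinearMap.smul_apply,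
    smul_eq_mul]
  simp only [← hA] at hg hAg hAg' ⊢
  linarith

end Quadratic

section Frobenius

variable {ι κ : Type*} [Fintype ι] [Fintype κ]

def frobInner : LinearMap.BilinForm ℝ (Matrix ι κ ℝ) :=
  LinearMap.mk₂ ℝ (fun X Y => ∑ i, ∑ l, X i l * Y i l)
    (fun X X' Y => by simp only [Matrix.add_apply, add_mul, Finset.sum_add_distrib])
    (fun c X Y => by simp only [Matrix.smul_apply, smul_eq_mul, Finset.mul_sum, mul_assoc])
    (fun X Y Y' => by simp only [Matrix.add_apply, mul_add, Finset.sum_add_distrib])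
    (fun c X Y => by simp only [Matrix.smul_apply, smul_eq_mul, Finset.mul_sum, mul_left_comm])

theorem frobInner_apply (X Y : Matrix ι κ ℝ) : frobInner X Y = ∑ i, X i ⬝ᵥ Y i := rfl

theorem frobInner_comm (X Y : Matrix ι κ ℝ) : frobInner X Y = frobInner Y X := by
  simp only [frobInner_apply, dotProduct_comm]

theorem frobInner_self_nonneg (X : Matrix ι κ ℝ) : 0 ≤ frobInner X X :=
  Finset.sum_nonneg fun i _ => dotProduct_self_star_nonneg (X i)

theorem sum_sum_sq_sub_eq_frobInner (X Y : Matrix ι κ ℝ) :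
    ∑ i, ∑ l, (X i l - Y i l) ^ 2 = frobInner (X - Y) (X - Y) := by
  simp only [frobInner_apply, dotProduct, Matrix.sub_apply, sq]

theorem frobInner_mul_left (A : Matrix ι ι ℝ) (X Y : Matrix ι κ ℝ) :
    frobInner (A * X) Y = frobInner X (Aᵀ * Y) := by
  simp only [frobInner_apply, dotProduct, mul_apply, transpose_apply, Finset.sum_mul,
    Finset.mul_sum]
  rw [Finset.sum_comm]
  conv_rhs => rw [Finset.sum_comm]
  refine Finset.sum_congr rfl fun l _ => ?_
  rw [Finset.sum_comm]
  exact Finset.sum_congr rfl fun j _ => Finset.sum_congr rfl fun i _ => by ring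

theorem frobInner_mul_eq_sum_sum (S : Matrix ι ι ℝ) (X : Matrix ι κ ℝ) :
    frobInner X (S * X) = ∑ i, ∑ j, S i j * (X i ⬝ᵥ X j) := by
  simp only [frobInner_apply, dotProduct, mul_apply, Finset.mul_sum]
  refine Finset.sum_congr rfl fun i _ => ?_
  rw [Finset.sum_comm]
  exact Finset.sum_congr rfl fun j _ => Finset.sum_congr rfl fun l _ => by ring

theorem sum_sum_mul_sq_sub_eq_frobInner {S : Matrix ι ι ℝ} (hS : Sᵀ = S)
    (hrow : ∀ i, ∑ j, S i j = 1) (X : Matrix ι κ ℝ) :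
    ∑ i, ∑ j, S i j * ∑ l, (X i l - X j l) ^ 2 = 2 * (frobInner X X - frobInner X (S * X)) := by
  have h := sum_sum_mul_bilin_sub (dotProductBilin ℝ ℝ) hS hrow X
  simp only [dotProductBilin_apply_apply] at h
  rw [frobInner_mul_eq_sum_sum, frobInner_apply, ← h]
  simp only [dotProduct, Pi.sub_apply, sq]

theorem neg_frobInner_le_frobInner_mul {S : Matrix ι ι ℝ} (hS : Sᵀ = S)
    (hnonneg : ∀ i j, 0 ≤ S i j) (hrow : ∀ i, ∑ j, S i j = 1) (X : Matrix ι κ ℝ) :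
    -frobInner X X ≤ frobInner X (S * X) := by
  rw [frobInner_mul_eq_sum_sum]
  exact neg_sum_bilin_le_sum_sum_mul_bilin (dotProductBilin ℝ ℝ) hS hnonneg hrow
    (fun v => dotProduct_self_star_nonneg v) X

end Frobenius

section Multiplex

variable {μ ι κ : Type*} [Fintype μ] [Fintype ι]

def multiObjHessian (S : μ → Matrix ι ι ℝ) (P : Matrix μ μ ℝ) :
    (μ → Matrix ι κ ℝ) →ₗ[ℝ] (μ → Matrix ι κ ℝ) where
  toFun Z m := (3 : ℝ) • Z m - S m * Z m - ∑ e, P e m • Z e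
  map_add' Z W := by
    funext m
    simp only [Pi.add_apply, Matrix.mul_add, smul_add, Finset.sum_add_distrib]
    abel
  map_smul' c Z := by
    funext m
    simp only [Pi.smul_apply, Matrix.mul_smul, smul_comm _ c, ← Finset.smul_sum, RingHom.id_apply,
      smul_sub]

theorem multiObjHessian_apply (S : μ → Matrix ι ι ℝ) (P : Matrix μ μ ℝ) (Z : μ → Matrix ι κ ℝ)
    (m : μ) : multiObjHessian S P Z m = (3 : ℝ) • Z m - S m * Z m - ∑ e, P e m • Z e := rfl

variable [Fintype κ]

def configInner : LinearMap.BilinForm ℝ (μ → Matrix ι κ ℝ) :=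
  LinearMap.mk₂ ℝ (fun Z W => ∑ m, frobInner (Z m) (W m))
    (fun Z Z' W => by simp only [Pi.add_apply, map_add, LinearMap.add_apply,
      Finset.sum_add_distrib])
    (fun c Z W => by simp only [Pi.smul_apply, map_smul, LinearMap.smul_apply, smul_eq_mul,
      Finset.mul_sum])
    (fun Z W W' => by simp only [Pi.add_apply, map_add, Finset.sum_add_distrib])
    (fun c Z W => by simp only [Pi.smul_apply, map_smul, smul_eq_mul, Finset.mul_sum])

theorem configInner_apply (Z W : μ → Matrix ι κ ℝ) :
    configInner Z W = ∑ m, frobInner (Z m) (W m) := rfl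

theorem configInner_comm (Z W : μ → Matrix ι κ ℝ) : configInner Z W = configInner W Z := by
  simp only [configInner_apply, frobInner_comm (Z _)]

variable {S : μ → Matrix ι ι ℝ} {P : Matrix μ μ ℝ}

theorem configInner_multiObjHessian (hP : Pᵀ = P) (Z W : μ → Matrix ι κ ℝ) :
    configInner Z (multiObjHessian S P W) = ∑ m, (3 * frobInner (Z m) (W m)
      - frobInner (Z m) (S m * W m)) - ∑ m, ∑ e, P m e * frobInner (Z m) (W e) := by
  simp only [configInner_apply, multiObjHessian_apply, map_sub, map_smul, map_sum, smul_eq_mul,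
    Finset.sum_sub_distrib]
  congr 1
  refine Finset.sum_congr rfl fun m _ => Finset.sum_congr rfl fun e _ => ?_
  rw [← hP, transpose_apply, hP]

theorem configInner_multiObjHessian_comm (hS : ∀ m, (S m)ᵀ = S m) (hP : Pᵀ = P)
    (Z W : μ → Matrix ι κ ℝ) :
    configInner (multiObjHessian S P Z) W = configInner Z (multiObjHessian S P W) := by
  rw [configInner_comm, configInner_multiObjHessian hP, configInner_multiObjHessian hP,
    sum_sum_mul_swap hP (fun m e => frobInner (W m) (Z e))]
  simp only [frobInner_comm (W _), frobInner_mul_left, hS]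

theorem configInner_multiObjHessian_self_le (hP : Pᵀ = P)
    (hP_nonneg : ∀ e n, 0 ≤ P e n) (hP_row : ∀ e, ∑ n, P e n = 1) (D : μ → Matrix ι κ ℝ) :
    configInner D (multiObjHessian S P D)
      ≤ ∑ m, frobInner (D m) ((4 : ℝ) • D m - S m * D m) := by
  have h := neg_sum_bilin_le_sum_sum_mul_bilin frobInner hP hP_nonneg hP_row
    frobInner_self_nonneg D
  rw [configInner_multiObjHessian hP]
  simp only [map_sub, map_smul, smul_eq_mul, Finset.sum_sub_distrib, ← Finset.mul_sum] at h ⊢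
  linarith

end Multiplex

theorem multiObj_eq {N d M : ℕ} {S : Fin M → Matrix (Fin N) (Fin N) ℝ}
    {P : Matrix (Fin M) (Fin M) ℝ} (hS : ∀ m, (S m)ᵀ = S m) (hS_row : ∀ m i, ∑ j, S m i j = 1)
    (hP : Pᵀ = P) (hP_row : ∀ e, ∑ n, P e n = 1) (Zinit Z : Fin M → Matrix (Fin N) (Fin d) ℝ) :
    multiObj S P Zinit Z = 1 / 2 * configInner Z (multiObjHessian S P Z)
      - configInner Zinit Z + 1 / 2 * configInner Zinit Zinit := by
  simp only [multiObj, sum_sum_sq_sub_eq_frobInner]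
  rw [sum_sum_mul_bilin_sub frobInner hP hP_row Z]
  simp only [sum_sum_mul_sq_sub_eq_frobInner (hS _) (hS_row _),
    configInner_multiObjHessian hP, configInner_apply, map_sub,
    LinearMap.sub_apply, frobInner_comm (Zinit _), Finset.sum_sub_distrib, ← Finset.mul_sum]
  ring

theorem stmt1_general {N d M : ℕ}
    (S : Fin M → Matrix (Fin N) (Fin N) ℝ) (P : Matrix (Fin M) (Fin M) ℝ)
    (Zinit : Fin M → Matrix (Fin N) (Fin d) ℝ)
    (hS_symm : ∀ m, (S m)ᵀ = S m)
    (hS_nonneg : ∀ m i j, 0 ≤ S m i j)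
    (hS_row : ∀ m i, ∑ j, S m i j = 1)
    (hP_symm : Pᵀ = P)
    (hP_nonneg : ∀ e n, 0 ≤ P e n)
    (hP_row : ∀ e, ∑ n, P e n = 1)
    (Z : ℕ → Fin M → Matrix (Fin N) (Fin d) ℝ)
    (hupd : ∀ k m, Z (k + 1) m =
      (9 : ℝ)⁻¹ • ((S m * S m) * Z k m)
        + (9 : ℝ)⁻¹ • (((3 : ℝ) • (1 : Matrix (Fin N) (Fin N) ℝ) + S m)
            * ((∑ e, P e m • Z k e) + Zinit m))) :
    ∀ k, multiObj S P Zinit (Z (k + 1)) ≤ multiObj S P Zinit (Z k) := by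
  intro k
  set A := multiObjHessian (κ := Fin d) S P
  set G := A (Z k) - Zinit
  set D : Fin M → Matrix (Fin N) (Fin d) ℝ :=
    fun m => -(9 : ℝ)⁻¹ • ((3 : ℝ) • G m + S m * G m)
  have hstep : Z (k + 1) = Z k + D := by
    funext m
    simp only [hupd, Pi.add_apply, D, G, A, Pi.sub_apply, multiObjHessian_apply, Matrix.add_mul,
      Matrix.mul_add, Matrix.mul_sub, Matrix.smul_mul, Matrix.mul_smul, Matrix.one_mul,
      Matrix.mul_assoc]
    module
  have hdescent : ∀ m,
      frobInner (G m) (D m) + 1 / 2 * frobInner (D m) ((4 : ℝ) • D m - S m * D m) ≤ 0 :=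
    fun m => preconditioned_step_descent (A := mulLeftLinearMap (Fin d) ℝ (S m))
      frobInner_self_nonneg
      (fun X Y => by simp only [mulLeftLinearMap_apply, frobInner_mul_left, hS_symm])
      (neg_frobInner_le_frobInner_mul (hS_symm m) (hS_nonneg m) (hS_row m)) rfl
  have hhess := configInner_multiObjHessian_self_le (S := S) hP_symm hP_nonneg hP_row D
  calc multiObj S P Zinit (Z (k + 1))
      = multiObj S P Zinit (Z k) + configInner G D + 1 / 2 * configInner D (A D) := by
        rw [hstep, multiObj_eq hS_symm hS_row hP_symm hP_row,
          multiObj_eq hS_symm hS_row hP_symm hP_row,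
          bilin_quadratic_add configInner_comm (configInner_multiObjHessian_comm hS_symm hP_symm)]
        ring
    _ ≤ multiObj S P Zinit (Z k)
        + ∑ m, (frobInner (G m) (D m) + 1 / 2 * frobInner (D m) ((4 : ℝ) • D m - S m * D m)) := by
        rw [configInner_apply G, Finset.sum_add_distrib, ← Finset.mul_sum]
        linarith
    _ ≤ multiObj S P Zinit (Z k) := by
        linarith [Finset.sum_nonpos fun m (_ : m ∈ Finset.univ) => hdescent m]

/-- the Newton-type update
`Z^(m,k+1) = (1/9)(S^(m))² Z^(m,k) + (1/9)(3 I_N + S^(m)) (Σ_e P_{em} Z^(e,k) + Z_init^(m))`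
is monotonically non-increasing for the objective `H`. -/
theorem stmt1 {N d M : ℕ} (hN : 0 < N) (hd : 0 < d) (hM : 0 < M)
    (S : Fin M → Matrix (Fin N) (Fin N) ℝ) (P : Matrix (Fin M) (Fin M) ℝ)
    (Zinit : Fin M → Matrix (Fin N) (Fin d) ℝ)
    (hS_symm : ∀ m, (S m)ᵀ = S m)
    (hS_nonneg : ∀ m i j, 0 ≤ S m i j)
    (hS_row : ∀ m i, ∑ j, S m i j = 1)
    (hP_symm : Pᵀ = P)
    (hP_nonneg : ∀ e n, 0 ≤ P e n)
    (hP_row : ∀ e, ∑ n, P e n = 1)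
    (Z : ℕ → Fin M → Matrix (Fin N) (Fin d) ℝ)
    (hupd : ∀ k m, Z (k + 1) m =
      (9 : ℝ)⁻¹ • ((S m * S m) * Z k m)
        + (9 : ℝ)⁻¹ • (((3 : ℝ) • (1 : Matrix (Fin N) (Fin N) ℝ) + S m)
            * ((∑ e, P e m • Z k e) + Zinit m))) :
    ∀ k, multiObj S P Zinit (Z (k + 1)) ≤ multiObj S P Zinit (Z k) :=
  stmt1_general S P Zinit hS_symm hS_nonneg hS_row hP_symm hP_nonneg hP_row Z hupd
end

section
/- For every m ∈ {1,…,M}, the gradient of the objective H with respect to the block variable Z^(m) (with the other blocks held fixed) is given by ∇_{Z^(m)} H({Z^(e)}_{e=1}^M) = (3 I_N − S^(m)) Z^(m) − Σ_{e=1}^M P_{em} Z^(e) − Z_init^(m). -/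
/-!
`H` is a sum of squares of affine functions of the entries, so its derivative at `Z` along `V`
is the polarization
`½ Σ S_ij ⟨Z_i − Z_j, V_i − V_j⟩ + ½ Σ P_en ⟨Z_e − Z_n, V_e − V_n⟩ + ⟨Z − Z_init, V⟩`.
For symmetric weights, exchanging `i` and `j` turns `½ Σ_ij S_ij ⟨x_i − x_j, w_i − w_j⟩` into
`Σ_i ⟨Σ_j S_ij (x_i − x_j), w_i⟩`, i.e. `⟨(I − S) x, w⟩` when the rows of `S` sum to one.
Applied to the rows of each `Z^(m)` and to the family of blocks `Z^(e)`, this writes the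
derivative as the Frobenius pairing of `V` with the family
`(3 I − S^(m)) Z^(m) − Σ_e P_em Z^(e) − Z_init^(m)`; the partial derivative in `Z^(m)` is its
restriction to directions supported in block `m`.
-/

open scoped BigOperators
open Matrix

attribute [local instance] Matrix.frobeniusNormedAddCommGroup Matrix.frobeniusNormedSpace

open Finset in
theorem sum_sum_mul_sub_mul_sub_of_isSymm {ι κ : Type*} [Fintype ι] [Fintype κ]
    {S : Matrix ι ι ℝ} (hS : S.IsSymm) (a b : ι → κ → ℝ) :
    ∑ i, ∑ j, S i j * ∑ k, (a i k - a j k) * (b i k - b j k) =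
      2 * ∑ i, ∑ k, (∑ j, S i j * (a i k - a j k)) * b i k := by
  set T : ι → ι → ℝ := fun i j => S i j * ∑ k, (a i k - a j k) * b i k
  calc ∑ i, ∑ j, S i j * ∑ k, (a i k - a j k) * (b i k - b j k)
      = ∑ i, ∑ j, (T i j + T j i) := by
        refine sum_congr rfl fun i _ => sum_congr rfl fun j _ => ?_
        simp only [T, hS.apply i j, mul_sum, ← sum_add_distrib]
        exact sum_congr rfl fun k _ => by ring
    _ = 2 * ∑ i, ∑ j, T i j := by
        simp only [sum_add_distrib]
        rw [sum_comm (f := fun i j => T j i), two_mul]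
    _ = 2 * ∑ i, ∑ k, (∑ j, S i j * (a i k - a j k)) * b i k := by
        simp only [T, mul_sum, sum_mul]
        exact sum_congr rfl fun i _ => sum_comm.trans
          (sum_congr rfl fun k _ => sum_congr rfl fun j _ => by ring)

open Finset in
theorem dirichlet_polarization_rows {n κ : Type*} [Fintype n] [Fintype κ]
    {S : Matrix n n ℝ} (hS : S.IsSymm) (hS_row : ∀ i, ∑ j, S i j = 1) (X W : Matrix n κ ℝ) :
    (1 / 2) * ∑ i, ∑ j, S i j * ∑ l, (X i l - X j l) * (W i l - W j l) =
      ∑ i, ∑ l, (X - S * X) i l * W i l := by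
  rw [sum_sum_mul_sub_mul_sub_of_isSymm hS X W, ← mul_assoc, one_div_mul_cancel two_ne_zero,
    one_mul]
  simp only [mul_sub, sum_sub_distrib, ← sum_mul, hS_row, one_mul, Matrix.sub_apply,
    Matrix.mul_apply]

open Finset in
theorem dirichlet_polarization_blocks {ι r s : Type*} [Fintype ι] [Fintype r] [Fintype s]
    {P : Matrix ι ι ℝ} (hP : P.IsSymm) (hP_row : ∀ e, ∑ n, P e n = 1) (Z V : ι → Matrix r s ℝ) :
    (1 / 2) * ∑ e, ∑ n, P e n * ∑ i, ∑ l, (Z e i l - Z n i l) * (V e i l - V n i l) =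
      ∑ e, ∑ i, ∑ l, (Z e - ∑ n, P e n • Z n) i l * V e i l := by
  have h := sum_sum_mul_sub_mul_sub_of_isSymm hP (fun e (p : r × s) => Z e p.1 p.2)
    (fun e p => V e p.1 p.2)
  simp only [Fintype.sum_prod_type] at h
  rw [h, ← mul_assoc, one_div_mul_cancel two_ne_zero, one_mul]
  simp only [mul_sub, sum_sub_distrib, ← sum_mul, hP_row, one_mul, Matrix.sub_apply,
    Matrix.sum_apply, Matrix.smul_apply, smul_eq_mul]

noncomputable def multiObjDeriv {N d M : ℕ}
    (S : Fin M → Matrix (Fin N) (Fin N) ℝ) (P : Matrix (Fin M) (Fin M) ℝ)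
    (Zinit Z V : Fin M → Matrix (Fin N) (Fin d) ℝ) : ℝ :=
  (1 / 2) * ∑ m, ∑ i, ∑ j, S m i j * ∑ l, (Z m i l - Z m j l) * (V m i l - V m j l)
    + (1 / 2) * ∑ e, ∑ n, P e n * ∑ i, ∑ l, (Z e i l - Z n i l) * (V e i l - V n i l)
    + ∑ m, ∑ i, ∑ l, (Z m i l - Zinit m i l) * V m i l

noncomputable def multiObjGrad {N d M : ℕ}
    (S : Fin M → Matrix (Fin N) (Fin N) ℝ) (P : Matrix (Fin M) (Fin M) ℝ)
    (Zinit Z : Fin M → Matrix (Fin N) (Fin d) ℝ) (m : Fin M) : Matrix (Fin N) (Fin d) ℝ :=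
  ((3 : ℝ) • (1 : Matrix (Fin N) (Fin N) ℝ) - S m) * Z m - (∑ e, P e m • Z e) - Zinit m

theorem multiObjDeriv_eq_sum_multiObjGrad {N d M : ℕ}
    {S : Fin M → Matrix (Fin N) (Fin N) ℝ} {P : Matrix (Fin M) (Fin M) ℝ}
    (hS : ∀ m, (S m).IsSymm) (hS_row : ∀ m i, ∑ j, S m i j = 1) (hP : P.IsSymm)
    (hP_row : ∀ e, ∑ n, P e n = 1) (Zinit Z V : Fin M → Matrix (Fin N) (Fin d) ℝ) :
    multiObjDeriv S P Zinit Z V = ∑ e, ∑ i, ∑ l, multiObjGrad S P Zinit Z e i l * V e i l := by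
  rw [multiObjDeriv, Finset.mul_sum, dirichlet_polarization_blocks hP hP_row]
  simp only [dirichlet_polarization_rows (hS _) (hS_row _), ← Finset.sum_add_distrib]
  refine Finset.sum_congr rfl fun e _ => Finset.sum_congr rfl fun i _ =>
    Finset.sum_congr rfl fun l _ => ?_
  simp only [multiObjGrad, Matrix.sub_apply, Matrix.sub_mul, Matrix.smul_mul, Matrix.one_mul,
    Matrix.smul_apply, Matrix.sum_apply, smul_eq_mul, hP.apply]
  ring

theorem HasFDerivAt.sq {E : Type*} [NormedAddCommGroup E] [NormedSpace ℝ E] {f : E → ℝ}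
    {f' : E →L[ℝ] ℝ} {x : E} (h : HasFDerivAt f f' x) :
    HasFDerivAt (fun y => f y ^ 2) ((2 * f x) • f') x := by
  simpa using h.pow 2

theorem exists_hasFDerivAt_multiObj_comp {N d M : ℕ} {E : Type*} [NormedAddCommGroup E]
    [NormedSpace ℝ E] (S : Fin M → Matrix (Fin N) (Fin N) ℝ) (P : Matrix (Fin M) (Fin M) ℝ)
    (Zinit : Fin M → Matrix (Fin N) (Fin d) ℝ) {Y Y' : E → Fin M → Matrix (Fin N) (Fin d) ℝ}
    {x : E} (hY : ∀ e i l, ∃ L : E →L[ℝ] ℝ,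
      HasFDerivAt (fun y => Y y e i l) L x ∧ ∀ v, L v = Y' v e i l) :
    ∃ L : E →L[ℝ] ℝ, HasFDerivAt (fun y => multiObj S P Zinit (Y y)) L x ∧
      ∀ v, L v = multiObjDeriv S P Zinit (Y x) (Y' v) := by
  choose D hD hDv using hY
  have hH := show HasFDerivAt (fun y => multiObj S P Zinit (Y y)) _ x from
    HasFDerivAt.fun_add (HasFDerivAt.fun_add
      (HasFDerivAt.const_mul (HasFDerivAt.fun_sum fun m _ => HasFDerivAt.fun_sum fun i _ =>
        HasFDerivAt.fun_sum fun j _ => HasFDerivAt.const_mul (HasFDerivAt.fun_sum fun l _ =>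
          ((hD m i l).fun_sub (hD m j l)).sq) _) _)
      (HasFDerivAt.const_mul (HasFDerivAt.fun_sum fun e _ => HasFDerivAt.fun_sum fun n _ =>
        HasFDerivAt.const_mul (HasFDerivAt.fun_sum fun i _ => HasFDerivAt.fun_sum fun l _ =>
          ((hD e i l).fun_sub (hD n i l)).sq) _) _))
      (HasFDerivAt.const_mul (HasFDerivAt.fun_sum fun m _ => HasFDerivAt.fun_sum fun i _ =>
        HasFDerivAt.fun_sum fun l _ => ((hD m i l).sub_const (Zinit m i l)).sq) _)
  refine ⟨_, hH, fun v => ?_⟩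
  simp only [multiObjDeriv, _root_.add_apply, _root_.smul_apply,
      _root_.sum_apply, _root_.sub_apply, hDv, smul_eq_mul, Finset.mul_sum]
  ring_nf

theorem exists_hasFDerivAt_update_apply {ι m n : Type*} [DecidableEq ι] [Fintype m] [Fintype n]
    (Z : ι → Matrix m n ℝ) (k e : ι) (i : m) (l : n) :
    ∃ L : Matrix m n ℝ →L[ℝ] ℝ,
      HasFDerivAt (fun X => Function.update Z k X e i l) L (Z k) ∧
        ∀ W, L W = (Pi.single k W : ι → Matrix m n ℝ) e i l := by
  by_cases h : e = k
  · subst h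
    simp only [Function.update_self, Pi.single_eq_same]
    exact ⟨_, (LinearMap.toContinuousLinearMap (Matrix.entryLinearMap ℝ ℝ i l)).hasFDerivAt,
      fun _ => rfl⟩
  · simp only [Function.update_of_ne h, Pi.single_eq_of_ne h, Matrix.zero_apply]
    exact ⟨0, hasFDerivAt_const _ _, fun _ => rfl⟩

theorem stmt2_general {N d M : ℕ}
    (S : Fin M → Matrix (Fin N) (Fin N) ℝ) (P : Matrix (Fin M) (Fin M) ℝ)
    (Zinit : Fin M → Matrix (Fin N) (Fin d) ℝ)
    (hS_symm : ∀ m, (S m)ᵀ = S m)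
    (hS_row : ∀ m i, ∑ j, S m i j = 1)
    (hP_symm : Pᵀ = P)
    (hP_row : ∀ e, ∑ n, P e n = 1)
    (Z : Fin M → Matrix (Fin N) (Fin d) ℝ) (m : Fin M) :
    ∃ L : Matrix (Fin N) (Fin d) ℝ →L[ℝ] ℝ,
      HasFDerivAt (fun X => multiObj S P Zinit (Function.update Z m X)) L (Z m) ∧
      ∀ W : Matrix (Fin N) (Fin d) ℝ,
        L W = ∑ i, ∑ l,
          ((((3 : ℝ) • (1 : Matrix (Fin N) (Fin N) ℝ) - S m) * Z m
              - (∑ e, P e m • Z e) - Zinit m : Matrix (Fin N) (Fin d) ℝ) i l) * W i l := by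
  obtain ⟨L, hL, hLW⟩ := exists_hasFDerivAt_multiObj_comp S P Zinit
    (Y' := fun W => Pi.single m W) (exists_hasFDerivAt_update_apply Z m)
  refine ⟨L, hL, fun W => (hLW W).trans ?_⟩
  rw [Function.update_eq_self, multiObjDeriv_eq_sum_multiObjGrad hS_symm hS_row hP_symm hP_row,
    Fintype.sum_eq_single m fun e he => by simp [Pi.single_eq_of_ne he]]
  simp only [Pi.single_eq_same]
  rfl

/-- the gradient of `H` with respect to the block variable `Z^(m)`
(in the Frobenius inner product, with all other blocks held fixed) is
`(3 I_N − S^(m)) Z^(m) − Σ_e P_{em} Z^(e) − Z_init^(m)`. -/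
theorem stmt2 {N d M : ℕ} (hN : 0 < N) (hd : 0 < d) (hM : 0 < M)
    (S : Fin M → Matrix (Fin N) (Fin N) ℝ) (P : Matrix (Fin M) (Fin M) ℝ)
    (Zinit : Fin M → Matrix (Fin N) (Fin d) ℝ)
    (hS_symm : ∀ m, (S m)ᵀ = S m)
    (hS_nonneg : ∀ m i j, 0 ≤ S m i j)
    (hS_row : ∀ m i, ∑ j, S m i j = 1)
    (hP_symm : Pᵀ = P)
    (hP_nonneg : ∀ e n, 0 ≤ P e n)
    (hP_row : ∀ e, ∑ n, P e n = 1)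
    (Z : Fin M → Matrix (Fin N) (Fin d) ℝ) (m : Fin M) :
    ∃ L : Matrix (Fin N) (Fin d) ℝ →L[ℝ] ℝ,
      HasFDerivAt (fun X => multiObj S P Zinit (Function.update Z m X)) L (Z m) ∧
      ∀ W : Matrix (Fin N) (Fin d) ℝ,
        L W = ∑ i, ∑ l,
          ((((3 : ℝ) • (1 : Matrix (Fin N) (Fin N) ℝ) - S m) * Z m
              - (∑ e, P e m • Z e) - Zinit m : Matrix (Fin N) (Fin d) ℝ) i l) * W i l :=
  stmt2_general S P Zinit hS_symm hS_row hP_symm hP_row Z m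
end
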